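/- Let H be a Gδ-dense subgroup of a topological group G (with the subspace topology). If H is simply sm-factorizable, then H is C-embedded in G, i.e., every continuous function f : H → ℝ extends to a continuous function on G. -/

import Mathlib

open Topology TopologicalSpace Pointwise Function Set

def IsCozero {X : Type*} [TopologicalSpace X] (U : Set X) : Prop :=
  ∃ f : X → ℝ, Continuous f ∧ U = f ⁻¹' {x : ℝ | x ≠ 0}

/-- A topological group is simply sm-factorizable if every cozero set is saturated with
respect to some continuous surjective homomorphism onto a separable metrizable topological group. -/
def SimplySMFactorizable (G : Type*) [Group G] [TopologicalSpace G] : Prop :=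
  ∀ U : Set G, IsCozero U →
    ∃ (H : Type) (gH : Group H) (tH : TopologicalSpace H),
      letI := gH
      letI := tH
      IsTopologicalGroup H ∧ SeparableSpace H ∧ MetrizableSpace H ∧
        ∃ π : G →* H, Continuous π ∧ Surjective π ∧ ⇑π ⁻¹' (⇑π '' U) = U

/-!
The preimage under `f` of a basic open set is a cozero set of `H`, hence saturated with respect to
the kernel of a continuous homomorphism onto a metrizable group; that kernel is a Gδ subgroup.
Intersecting countably many of them and tracing back to `G` yields a Gδ set around `1`, which
contains a Gδ subgroup `P` of `G`, and `f` is constant on the cosets of `H ∩ P`. As `H` is Gδ-dense,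
every coset `x P` meets `H`, so `F x := f h` for any `h ∈ H ∩ x P` is well defined; it is
continuous because `O * P` is open whenever `O` is.
-/

theorem IsCozero.preimage {X Y : Type*} [TopologicalSpace X] [TopologicalSpace Y] {U : Set Y}
    (hU : IsCozero U) {f : X → Y} (hf : Continuous f) : IsCozero (f ⁻¹' U) := by
  obtain ⟨g, hg, rfl⟩ := hU
  exact ⟨g ∘ f, hg.comp hf, rfl⟩

theorem IsOpen.isCozero {X : Type*} [TopologicalSpace X] [PerfectlyNormalSpace X] {U : Set X}
    (hU : IsOpen U) : IsCozero U := by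
  obtain ⟨f, hf, -⟩ :=
    perfectlyNormalSpace_iff_forall_isClosed_preimage_zero.mp ‹_› Uᶜ hU.isClosed_compl
  refine ⟨f, f.continuous, ?_⟩
  rw [← compl_compl U, hf]
  rfl

theorem Topology.IsInducing.isGδ_iff {X Y : Type*} [TopologicalSpace X] [TopologicalSpace Y]
    {e : X → Y} (he : IsInducing e) {s : Set X} : IsGδ s ↔ ∃ t, IsGδ t ∧ e ⁻¹' t = s := by
  refine ⟨fun hs => ?_, ?_⟩
  · obtain ⟨U, hU, rfl⟩ := hs.eq_iInter_nat
    choose V hV hVU using fun n => he.isOpen_iff.mp (hU n)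
    exact ⟨⋂ n, V n, .iInter fun n => (hV n).isGδ, by simp only [preimage_iInter, hVU]⟩
  · rintro ⟨t, ht, rfl⟩
    exact ht.preimage he.continuous

namespace Subgroup

variable {G : Type*} [Group G]

def iInterOfMulSubset (V : ℕ → Set G) (one_mem : ∀ n, (1 : G) ∈ V n)
    (mul_subset : ∀ n, V (n + 1) * V (n + 1) ⊆ V n) : Subgroup G where
  carrier := ⋂ n, V n ∩ (V n)⁻¹
  one_mem' := mem_iInter.mpr fun n => ⟨one_mem n, by simpa using one_mem n⟩
  mul_mem' {x y} hx hy := by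
    simp only [mem_iInter, mem_inter_iff, mem_inv] at hx hy ⊢
    refine fun n => ⟨mul_subset n (mul_mem_mul (hx _).1 (hy _).1), ?_⟩
    rw [mul_inv_rev]
    exact mul_subset n (mul_mem_mul (hy _).2 (hx _).2)
  inv_mem' {x} hx := by
    simp only [mem_iInter, mem_inter_iff, mem_inv, inv_inv] at hx ⊢
    exact fun n => (hx n).symm

theorem coe_iInterOfMulSubset (V : ℕ → Set G) (one_mem : ∀ n, (1 : G) ∈ V n)
    (mul_subset : ∀ n, V (n + 1) * V (n + 1) ⊆ V n) :
    (iInterOfMulSubset V one_mem mul_subset : Set G) = ⋂ n, V n ∩ (V n)⁻¹ :=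
  rfl

end Subgroup

theorem exists_seq_openNhdsOf_one_mul_subset {G : Type*} [Monoid G] [TopologicalSpace G]
    [ContinuousMul G] (W : ℕ → OpenNhdsOf (1 : G)) :
    ∃ V : ℕ → OpenNhdsOf (1 : G), (∀ n, V n ≤ W n) ∧
      ∀ n, (V (n + 1) : Set G) * V (n + 1) ⊆ V n := by
  have half (U : OpenNhdsOf (1 : G)) : ∃ V : OpenNhdsOf (1 : G), (V : Set G) * V ⊆ U := by
    obtain ⟨V, hVo, hV1, hVU⟩ := exists_open_nhds_one_mul_subset (U.isOpen.mem_nhds U.mem)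
    exact ⟨⟨⟨V, hVo⟩, hV1⟩, hVU⟩
  choose half hhalf using half
  let V : ℕ → OpenNhdsOf (1 : G) := fun n => Nat.rec (W 0) (fun n Vn => half (Vn ⊓ W (n + 1))) n
  have hV (n : ℕ) : (V (n + 1) : Set G) * V (n + 1) ⊆ (V n ⊓ W (n + 1) : OpenNhdsOf (1 : G)) :=
    hhalf _
  refine ⟨V, fun n => ?_, fun n => (hV n).trans inf_le_left⟩
  cases n with
  | zero => exact le_rfl
  | succ n => exact (subset_mul_left _ (V (n + 1)).mem).trans ((hV n).trans inf_le_right)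

theorem IsGδ.exists_subgroup_isGδ_subset {G : Type*} [Group G] [TopologicalSpace G]
    [IsTopologicalGroup G] {S : Set G} (hS : IsGδ S) (h1 : (1 : G) ∈ S) :
    ∃ P : Subgroup G, IsGδ (P : Set G) ∧ (P : Set G) ⊆ S := by
  obtain ⟨W, hWo, rfl⟩ := hS.eq_iInter_nat
  obtain ⟨V, hVW, hV⟩ :=
    exists_seq_openNhdsOf_one_mul_subset fun n => ⟨⟨W n, hWo n⟩, mem_iInter.mp h1 n⟩
  refine ⟨.iInterOfMulSubset (fun n => V n) (fun n => (V n).mem) hV, ?_, ?_⟩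
  · rw [Subgroup.coe_iInterOfMulSubset]
    exact .iInter fun n => ((V n).isOpen.inter (V n).isOpen.inv).isGδ
  · rw [Subgroup.coe_iInterOfMulSubset]
    exact iInter_mono fun n => inter_subset_left.trans (hVW n)

theorem SimplySMFactorizable.exists_isGδ_subgroup_mul_mem_iff {H : Type*} [Group H]
    [TopologicalSpace H] (hH : SimplySMFactorizable H) {U : Set H} (hU : IsCozero U) :
    ∃ N : Subgroup H, IsGδ (N : Set H) ∧ ∀ h, ∀ n ∈ N, h * n ∈ U ↔ h ∈ U := by
  obtain ⟨K, gK, tK, -, -, hK, π, hπ, -, hsat⟩ := hH U hU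
  refine ⟨π.ker, ?_, fun h n hn => ?_⟩
  · rw [MonoidHom.coe_ker]
    exact isClosed_singleton.isGδ.preimage hπ
  · have hπn : π (h * n) = π h := by rw [map_mul, MonoidHom.mem_ker.mp hn, mul_one]
    rw [← hsat, mem_preimage, mem_preimage, hπn]

theorem SimplySMFactorizable.exists_isGδ_subgroup_apply_mul_eq {H Y : Type*} [Group H]
    [TopologicalSpace H] [TopologicalSpace Y] [PerfectlyNormalSpace Y] [T0Space Y]
    [SecondCountableTopology Y] (hH : SimplySMFactorizable H) {f : H → Y} (hf : Continuous f) :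
    ∃ N : Subgroup H, IsGδ (N : Set H) ∧ ∀ h, ∀ n ∈ N, f (h * n) = f h := by
  have hB := isBasis_countableBasis Y
  choose N hN hNf using fun b : countableBasis Y =>
    hH.exists_isGδ_subgroup_mul_mem_iff ((hB.isOpen b.2).isCozero.preimage hf)
  have := (countable_countableBasis Y).to_subtype
  refine ⟨⨅ b, N b, ?_, fun h n hn => hB.eq_iff.mpr fun s hs => ?_⟩
  · rw [Subgroup.coe_iInf]
    exact .iInter hN
  · exact hNf ⟨s, hs⟩ h n (Subgroup.mem_iInf.mp hn _)

theorem Subgroup.exists_continuous_extension_of_isGδ_subgroup {G Y : Type*} [Group G]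
    [TopologicalSpace G] [ContinuousMul G] [TopologicalSpace Y] {H : Subgroup G}
    (hdense : ∀ s : Set G, IsGδ s → s.Nonempty → (s ∩ (H : Set G)).Nonempty)
    {P : Subgroup G} (hP : IsGδ (P : Set G)) {f : H → Y} (hf : Continuous f)
    (hfP : ∀ h n : H, (n : G) ∈ P → f (h * n) = f h) :
    ∃ F : G → Y, Continuous F ∧ ∀ h : H, F h = f h := by
  have hmeet (x : G) {O : Set G} (hO : IsOpen O) (hxO : ∃ y ∈ O, x⁻¹ * y ∈ P) :
      ∃ h : H, (h : G) ∈ O ∧ x⁻¹ * h ∈ P := by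
    obtain ⟨z, ⟨hzO, hzP⟩, hzH⟩ := hdense (O ∩ (x⁻¹ * ·) ⁻¹' P)
      (hO.isGδ.inter (hP.preimage (continuous_const_mul _))) hxO
    exact ⟨⟨z, hzH⟩, hzO, hzP⟩
  choose rep _ hrep using fun x : G => hmeet x isOpen_univ ⟨x, trivial, by simp⟩
  have hF (x : G) (h : H) (hh : x⁻¹ * h ∈ P) : f (rep x) = f h := by
    have : ((rep x)⁻¹ * h : G) ∈ P := by
      simpa [mul_assoc] using P.mul_mem (P.inv_mem (hrep x)) hh
    rw [← hfP (rep x) ((rep x)⁻¹ * h) this, mul_inv_cancel_left]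
  refine ⟨fun x => f (rep x), continuous_def.mpr fun W hW => ?_, fun h => hF h h (by simp)⟩
  obtain ⟨O, hO, hOW⟩ := isOpen_induced_iff.mp (hW.preimage hf)
  refine isOpen_iff_forall_mem_open.mpr fun x₀ hx₀ => ⟨O * P, ?_, hO.mul_right, ?_⟩
  · rintro x ⟨o, ho, p, hp, rfl⟩
    obtain ⟨h, hhO, hhP⟩ := hmeet (o * p) hO ⟨o, ho, by simpa using P.inv_mem hp⟩
    show f (rep _) ∈ W
    rw [hF _ h hhP]
    exact (hOW ▸ hhO : h ∈ f ⁻¹' W)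
  · refine ⟨rep x₀, ?_, (rep x₀)⁻¹ * x₀, ?_, mul_inv_cancel_left _ _⟩
    · exact (hOW.symm ▸ hx₀ : rep x₀ ∈ Subtype.val ⁻¹' O)
    · simpa using P.inv_mem (hrep x₀)

/-- A Gδ-dense simply sm-factorizable subgroup of a topological group is C-embedded. -/
theorem statement15 (G : Type*) [Group G] [TopologicalSpace G] [IsTopologicalGroup G]
    (H : Subgroup G)
    (hdense : ∀ s : Set G, IsGδ s → s.Nonempty → (s ∩ (H : Set G)).Nonempty)
    (hH : SimplySMFactorizable H) :
    ∀ f : H → ℝ, Continuous f →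
      ∃ F : G → ℝ, Continuous F ∧ ∀ h : H, F ↑h = f h := by
  intro f hf
  obtain ⟨N, hN, hfN⟩ := hH.exists_isGδ_subgroup_apply_mul_eq hf
  obtain ⟨S, hS, hSN⟩ := IsInducing.subtypeVal.isGδ_iff.mp hN
  have h1S : (1 : G) ∈ S := by
    have := N.one_mem
    rwa [← SetLike.mem_coe, ← hSN] at this
  obtain ⟨P, hP, hPS⟩ := hS.exists_subgroup_isGδ_subset h1S
  refine H.exists_continuous_extension_of_isGδ_subgroup hdense hP hf fun h n hn => hfN h n ?_
  rw [← SetLike.mem_coe, ← hSN]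
  exact hPS hn
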